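/- arXiv:2603.11204 — 5 statements merged into one kernel-verified Lean document; each statement's English description precedes it below -/
import Mathlib

section
/- Let d ≥ 1 and let Φ : M_d(ℂ) → M_d(ℂ) be a linear map which is KS-decomposable: Φ = λ·Φ₁ + (1−λ)·Φ₂ for some λ ∈ [0,1], where Φ₁ is a unital Kadison–Schwarz operator and Φ₂ is a unital co-Kadison–Schwarz operator. Then for every X ∈ M_d(ℂ), Φ(X* ∘ X) − Φ(X)* ∘ Φ(X) ≥ λ(1−λ)·(Φ₁(X) − Φ₂(X))* ∘ (Φ₁(X) − Φ₂(X)), where A ∘ B := AB + BA is the Jordan product (so in particular X* ∘ X = X*X + XX*). -/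
/-!
A unital map sending every `Yᴴ * Y` to a Hermitian matrix sends Hermitian matrices to Hermitian
ones (`2H = (H + 1)ᴴ(H + 1) - HᴴH - 1`), hence commutes with `ᴴ` since Hermitian matrices span.
So the Kadison–Schwarz inequality of `Φ₁` at `Xᴴ` is the co-Kadison–Schwarz inequality at `X` and
vice versa: with `A = Φ₁ X`, `B = Φ₂ X`, both `Φ₁ (Xᴴ ∘ X) - Aᴴ ∘ A` and `Φ₂ (Xᴴ ∘ X) - Bᴴ ∘ B` are
positive semidefinite. The theorem is then the variance identity
`c Aᴴ∘A + (1-c) Bᴴ∘B = Cᴴ∘C + c(1-c) (A-B)ᴴ∘(A-B)` for `C = c A + (1-c) B`.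
-/

open scoped ComplexOrder
open Matrix

noncomputable section

/-- Blockwise amplification `id_k ⊗ Φ` of a map `Φ` on `d × d` complex matrices,
acting on `M_k(M_d(ℂ))` (identified with `(k*d) × (k*d)` matrices indexed by `Fin k × Fin d`). -/
def amp (k : ℕ) {d : ℕ}
    (Φ : Matrix (Fin d) (Fin d) ℂ → Matrix (Fin d) (Fin d) ℂ)
    (X : Matrix (Fin k × Fin d) (Fin k × Fin d) ℂ) :
    Matrix (Fin k × Fin d) (Fin k × Fin d) ℂ :=
  Matrix.of fun p q => Φ (Matrix.of fun i j => X (p.1, i) (q.1, j)) p.2 q.2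

/-- The completely depolarizing map `Δ(X) = (Tr X / d) • I_d`. -/
def Delta (d : ℕ) (X : Matrix (Fin d) (Fin d) ℂ) : Matrix (Fin d) (Fin d) ℂ :=
  (Matrix.trace X / (d : ℂ)) • (1 : Matrix (Fin d) (Fin d) ℂ)

open scoped ComplexStarModule

section StarPreserving

variable {A B : Type*}

lemma LinearMap.map_star_of_map_isSelfAdjoint [AddCommGroup A] [Module ℂ A] [StarAddMonoid A]
    [StarModule ℂ A] [AddCommGroup B] [Module ℂ B] [StarAddMonoid B] [StarModule ℂ B]
    (f : A →ₗ[ℂ] B) (hf : ∀ a, IsSelfAdjoint a → IsSelfAdjoint (f a)) (a : A) :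
    f (star a) = star (f a) := by
  conv_lhs => rw [← realPart_add_I_smul_imaginaryPart a]
  conv_rhs => rw [← realPart_add_I_smul_imaginaryPart a]
  simp only [star_add, star_smul, map_add, map_smul, (ℜ a).2.star_eq, (ℑ a).2.star_eq,
    (hf _ (ℜ a).2).star_eq, (hf _ (ℑ a).2).star_eq]

lemma LinearMap.map_isSelfAdjoint_of_map_star_mul_self [Ring A] [StarRing A] [Algebra ℂ A]
    [Ring B] [StarRing B] [Algebra ℂ B] [StarModule ℂ B]
    (f : A →ₗ[ℂ] B) (h_one : f 1 = 1) (hf : ∀ a, IsSelfAdjoint (f (star a * a))) {h : A}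
    (hh : IsSelfAdjoint h) : IsSelfAdjoint (f h) := by
  have key : (2 : ℂ) • h = star (h + 1) * (h + 1) - star h * h - 1 := by
    rw [star_add, hh.star_eq, star_one, two_smul]
    noncomm_ring
  have h2 : IsSelfAdjoint ((2 : ℂ) • f h) := by
    rw [← map_smul, key, map_sub, map_sub, h_one]
    exact ((hf _).sub (hf _)).sub (.one B)
  simpa using (show IsSelfAdjoint (2⁻¹ : ℂ) by simp [IsSelfAdjoint]).smul h2

lemma LinearMap.map_conjTranspose_of_posSemidef_sub {n : Type*} [Fintype n] [DecidableEq n]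
    (Φ : Matrix n n ℂ →ₗ[ℂ] Matrix n n ℂ) (h_one : Φ 1 = 1)
    {F : Matrix n n ℂ → Matrix n n ℂ} (hF : ∀ Y, (F Y).IsHermitian)
    (hΦ : ∀ Y, (Φ (Yᴴ * Y) - F Y).PosSemidef) (X : Matrix n n ℂ) :
    Φ Xᴴ = (Φ X)ᴴ :=
  Φ.map_star_of_map_isSelfAdjoint (fun _ ↦ Φ.map_isSelfAdjoint_of_map_star_mul_self h_one
    fun Y ↦ (sub_add_cancel (Φ (Yᴴ * Y)) (F Y) ▸ (hΦ Y).isHermitian.add (hF Y) :)) X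

end StarPreserving

lemma jordan_convex_combination {R A : Type*} [CommRing R] [Ring A] [Algebra R A]
    (c : R) (u v a a' b b' : A) :
    c • u + (1 - c) • v
      - ((c • a' + (1 - c) • b') * (c • a + (1 - c) • b)
          + (c • a + (1 - c) • b) * (c • a' + (1 - c) • b'))
      - (c * (1 - c)) • ((a' - b') * (a - b) + (a - b) * (a' - b'))
    = c • (u - (a' * a + a * a')) + (1 - c) • (v - (b' * b + b * b')) := by
  simp only [mul_add, add_mul, sub_mul, mul_sub, smul_mul_assoc, mul_smul_comm, smul_smul,
    smul_add, smul_sub]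
  module

theorem stmt4_general (d : ℕ)
    (Φ Φ₁ Φ₂ : Matrix (Fin d) (Fin d) ℂ →ₗ[ℂ] Matrix (Fin d) (Fin d) ℂ)
    (l : ℝ) (hl0 : 0 ≤ l) (hl1 : l ≤ 1)
    (hdec : ∀ X, Φ X = (l : ℂ) • Φ₁ X + ((1 : ℂ) - (l : ℂ)) • Φ₂ X)
    (h1u : Φ₁ 1 = 1) (h2u : Φ₂ 1 = 1)
    (h1KS : ∀ X : Matrix (Fin d) (Fin d) ℂ,
      (Φ₁ (Xᴴ * X) - (Φ₁ X)ᴴ * Φ₁ X).PosSemidef)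
    (h2coKS : ∀ X : Matrix (Fin d) (Fin d) ℂ,
      (Φ₂ (Xᴴ * X) - Φ₂ X * (Φ₂ X)ᴴ).PosSemidef) :
    ∀ X : Matrix (Fin d) (Fin d) ℂ,
      (Φ (Xᴴ * X + X * Xᴴ) - ((Φ X)ᴴ * Φ X + Φ X * (Φ X)ᴴ)
        - ((l : ℂ) * ((1 : ℂ) - (l : ℂ))) •
            ((Φ₁ X - Φ₂ X)ᴴ * (Φ₁ X - Φ₂ X)
              + (Φ₁ X - Φ₂ X) * (Φ₁ X - Φ₂ X)ᴴ)).PosSemidef := by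
  have hstar₁ := Φ₁.map_conjTranspose_of_posSemidef_sub h1u
    (fun Y ↦ isHermitian_conjTranspose_mul_self (Φ₁ Y)) h1KS
  have hstar₂ := Φ₂.map_conjTranspose_of_posSemidef_sub h2u
    (fun Y ↦ isHermitian_mul_conjTranspose_self (Φ₂ Y)) h2coKS
  intro X
  have hcoKS₁ : (Φ₁ (X * Xᴴ) - Φ₁ X * (Φ₁ X)ᴴ).PosSemidef := by
    simpa [hstar₁] using h1KS Xᴴ
  have hKS₂ : (Φ₂ (X * Xᴴ) - (Φ₂ X)ᴴ * Φ₂ X).PosSemidef := by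
    simpa [hstar₂] using h2coKS Xᴴ
  have hconj : (Φ X)ᴴ = (l : ℂ) • (Φ₁ X)ᴴ + ((1 : ℂ) - (l : ℂ)) • (Φ₂ X)ᴴ := by
    simp [hdec]
  rw [hconj, hdec, hdec X, conjTranspose_sub, jordan_convex_combination]
  have hl_nonneg : (0 : ℂ) ≤ l := by exact_mod_cast hl0
  have hl_compl_nonneg : (0 : ℂ) ≤ 1 - l := by exact_mod_cast sub_nonneg.mpr hl1
  convert ((h1KS X).add hcoKS₁).smul hl_nonneg |>.add (((h2coKS X).add hKS₂).smul hl_compl_nonneg) using 3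
  all_goals (rw [map_add]; abel)

theorem stmt4 (d : ℕ) (hd : 1 ≤ d)
    (Φ Φ₁ Φ₂ : Matrix (Fin d) (Fin d) ℂ →ₗ[ℂ] Matrix (Fin d) (Fin d) ℂ)
    (l : ℝ) (hl0 : 0 ≤ l) (hl1 : l ≤ 1)
    (hdec : ∀ X, Φ X = (l : ℂ) • Φ₁ X + ((1 : ℂ) - (l : ℂ)) • Φ₂ X)
    (h1u : Φ₁ 1 = 1) (h2u : Φ₂ 1 = 1)
    (h1KS : ∀ X : Matrix (Fin d) (Fin d) ℂ,
      (Φ₁ (Xᴴ * X) - (Φ₁ X)ᴴ * Φ₁ X).PosSemidef)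
    (h2coKS : ∀ X : Matrix (Fin d) (Fin d) ℂ,
      (Φ₂ (Xᴴ * X) - Φ₂ X * (Φ₂ X)ᴴ).PosSemidef) :
    ∀ X : Matrix (Fin d) (Fin d) ℂ,
      (Φ (Xᴴ * X + X * Xᴴ) - ((Φ X)ᴴ * Φ X + Φ X * (Φ X)ᴴ)
        - ((l : ℂ) * ((1 : ℂ) - (l : ℂ))) •
            ((Φ₁ X - Φ₂ X)ᴴ * (Φ₁ X - Φ₂ X)
              + (Φ₁ X - Φ₂ X) * (Φ₁ X - Φ₂ X)ᴴ)).PosSemidef :=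
  stmt4_general d Φ Φ₁ Φ₂ l hl0 hl1 hdec h1u h2u h1KS h2coKS
end
end

section
/- Let d ≥ 2 and let a ∈ [0,1]. Define R_a : M_d(ℂ) → M_d(ℂ) by R_a(X) = (1/(d−a))·(Tr(X)·I_d − a·X). Then R_a is KS-decomposable: there exist λ ∈ [0,1], a unital Kadison–Schwarz operator Φ₁, and a unital co-Kadison–Schwarz operator Φ₂ with R_a = λΦ₁ + (1−λ)Φ₂. -/
/-!
A map `Ψ Y = c • ∑ᵢ Kᵢᴴ Y Kᵢ` with `c ≥ 0` and `Ψ 1 = 1` is Kadison–Schwarz, since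
`Ψ (Yᴴ Y) - (Ψ Y)ᴴ (Ψ Y) = c • ∑ᵢ (Y Kᵢ - Kᵢ Ψ Y)ᴴ (Y Kᵢ - Kᵢ Ψ Y)`; applying this to `Y = Xᵀᴴ`
shows that `X ↦ Ψ Xᵀ` is co-Kadison–Schwarz. The depolarizing map `X ↦ (Tr X / d) • 1` has the
matrix units `Eᵢⱼ` as Kraus operators (with `c = 1 / d`), and the reduction map
`X ↦ (Tr X • 1 - X) / (d - 1)` is `X ↦ Ψ Xᵀ` for the Werner–Holevo family `Eᵢⱼ - Eⱼᵢ` (with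
`c = 1 / (2 (d - 1))`). Finally `R_a = λ Δ + (1 - λ) R` with `λ = d (1 - a) / (d - a)`.
-/

open scoped ComplexOrder
open Matrix

noncomputable section

section KadisonSchwarz

variable {𝕜 n ι : Type*} [RCLike 𝕜] [Fintype n] [Fintype ι]

def IsKadisonSchwarz (Φ : Matrix n n 𝕜 →ₗ[𝕜] Matrix n n 𝕜) : Prop :=
  ∀ X, (Φ (Xᴴ * X) - (Φ X)ᴴ * Φ X).PosSemidef

def IsCoKadisonSchwarz (Φ : Matrix n n 𝕜 →ₗ[𝕜] Matrix n n 𝕜) : Prop :=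
  ∀ X, (Φ (Xᴴ * X) - Φ X * (Φ X)ᴴ).PosSemidef

def krausMap (c : ℝ) (K : ι → Matrix n n 𝕜) : Matrix n n 𝕜 →ₗ[𝕜] Matrix n n 𝕜 where
  toFun Y := c • ∑ i, (K i)ᴴ * Y * K i
  map_add' Y Z := by
    simp only [Matrix.mul_add, Matrix.add_mul, Finset.sum_add_distrib, smul_add]
  map_smul' a Y := by simp [Finset.smul_sum, smul_comm c a]

@[simp]
lemma krausMap_apply (c : ℝ) (K : ι → Matrix n n 𝕜) (Y : Matrix n n 𝕜) :
    krausMap c K Y = c • ∑ i, (K i)ᴴ * Y * K i := rfl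

lemma conjTranspose_krausMap (c : ℝ) (K : ι → Matrix n n 𝕜) (Y : Matrix n n 𝕜) :
    (krausMap c K Y)ᴴ = krausMap c K Yᴴ := by
  simp [conjTranspose_sum, Matrix.mul_assoc]

variable [DecidableEq n]

lemma krausMap_conjTranspose_mul_self_sub (c : ℝ) (K : ι → Matrix n n 𝕜)
    (hK : krausMap c K 1 = 1) (Y : Matrix n n 𝕜) :
    krausMap c K (Yᴴ * Y) - (krausMap c K Y)ᴴ * krausMap c K Y =
      c • ∑ i, (Y * K i - K i * krausMap c K Y)ᴴ * (Y * K i - K i * krausMap c K Y) := by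
  set Z := krausMap c K Y with hZ
  have hZH : Zᴴ = krausMap c K Yᴴ := conjTranspose_krausMap c K Y
  have expand : ∀ i, (Y * K i - K i * Z)ᴴ * (Y * K i - K i * Z) =
      (K i)ᴴ * (Yᴴ * Y) * K i - (K i)ᴴ * Yᴴ * K i * Z - Zᴴ * ((K i)ᴴ * Y * K i)
        + Zᴴ * ((K i)ᴴ * 1 * K i) * Z := fun i => by
    simp only [conjTranspose_sub, conjTranspose_mul]
    noncomm_ring
  have hB : c • ∑ i, (K i)ᴴ * Yᴴ * K i * Z = Zᴴ * Z := by
    rw [← Finset.sum_mul, ← smul_mul_assoc, ← krausMap_apply, hZH]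
  have hC : c • ∑ i, Zᴴ * ((K i)ᴴ * Y * K i) = Zᴴ * Z := by
    rw [← Finset.mul_sum, ← mul_smul_comm, ← krausMap_apply]
  have hD : c • ∑ i, Zᴴ * ((K i)ᴴ * 1 * K i) * Z = Zᴴ * Z := by
    rw [← Finset.sum_mul, ← Finset.mul_sum, ← smul_mul_assoc, ← mul_smul_comm,
      ← krausMap_apply, hK, Matrix.mul_one]
  simp only [expand, Finset.sum_add_distrib, Finset.sum_sub_distrib, smul_add, smul_sub, hB, hC,
    hD, ← krausMap_apply]
  abel

theorem krausMap_isKadisonSchwarz {c : ℝ} (hc : 0 ≤ c) {K : ι → Matrix n n 𝕜}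
    (hK : krausMap c K 1 = 1) : IsKadisonSchwarz (krausMap c K) := fun Y => by
  rw [krausMap_conjTranspose_mul_self_sub c K hK]
  exact (posSemidef_sum _ fun i _ => posSemidef_conjTranspose_mul_self _).smul hc

theorem isCoKadisonSchwarz_krausMap_comp_transpose {c : ℝ} (hc : 0 ≤ c)
    {K : ι → Matrix n n 𝕜} (hK : krausMap c K 1 = 1) :
    IsCoKadisonSchwarz (krausMap c K ∘ₗ (transposeLinearEquiv n n 𝕜 𝕜).toLinearMap) :=
  fun X => by
    have h := krausMap_isKadisonSchwarz hc hK Xᵀᴴ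
    rwa [conjTranspose_conjTranspose, ← conjTranspose_krausMap,
      conjTranspose_transpose_eq_transpose_conjTranspose, ← transpose_mul,
      conjTranspose_conjTranspose] at h

variable (𝕜 n)

def depolarizing : Matrix n n 𝕜 →ₗ[𝕜] Matrix n n 𝕜 :=
  krausMap (Fintype.card n : ℝ)⁻¹ fun p : n × n => single p.1 p.2 1

def reduction : Matrix n n 𝕜 →ₗ[𝕜] Matrix n n 𝕜 :=
  krausMap (2 * ((Fintype.card n : ℝ) - 1))⁻¹
      (fun p : n × n => single p.1 p.2 1 - single p.2 p.1 1) ∘ₗ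
    (transposeLinearEquiv n n 𝕜 𝕜).toLinearMap

variable {𝕜 n}

lemma reduction_eq_krausMap_transpose (X : Matrix n n 𝕜) :
    reduction 𝕜 n X = krausMap (2 * ((Fintype.card n : ℝ) - 1))⁻¹
      (fun p : n × n => single p.1 p.2 1 - single p.2 p.1 1) Xᵀ := rfl

lemma depolarizing_apply (X : Matrix n n 𝕜) :
    depolarizing 𝕜 n X = (Fintype.card n : ℝ)⁻¹ • (trace X • 1) := by
  ext k l
  simp [depolarizing, Matrix.sum_apply, single_apply, trace, Fintype.sum_prod_type,
    Matrix.one_apply, ite_and]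

lemma reduction_apply (X : Matrix n n 𝕜) :
    reduction 𝕜 n X = ((Fintype.card n : ℝ) - 1)⁻¹ • (trace X • 1 - X) := by
  ext k l
  simp [reduction, Matrix.sub_mul, Matrix.mul_sub, Matrix.sum_apply, single_apply, trace,
    Fintype.sum_prod_type, Matrix.one_apply, Finset.sum_sub_distrib, ite_and]
  module

lemma depolarizing_one [Nonempty n] : depolarizing 𝕜 n 1 = 1 := by
  have hcard : (Fintype.card n : ℝ) ≠ 0 := by positivity
  rw [depolarizing_apply, trace_one, Nat.cast_smul_eq_nsmul, ← Nat.cast_smul_eq_nsmul ℝ,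
    smul_smul, inv_mul_cancel₀ hcard, one_smul]

lemma reduction_one (hn : 1 < Fintype.card n) : reduction 𝕜 n 1 = 1 := by
  have hcard : (Fintype.card n : ℝ) - 1 ≠ 0 := by
    rw [sub_ne_zero]
    exact_mod_cast hn.ne'
  have hsub :
      (Fintype.card n : ℝ) • (1 : Matrix n n 𝕜) - 1 = ((Fintype.card n : ℝ) - 1) • 1 := by
    rw [sub_smul, one_smul]
  rw [reduction_apply, trace_one, Nat.cast_smul_eq_nsmul, ← Nat.cast_smul_eq_nsmul ℝ, hsub,
    smul_smul, inv_mul_cancel₀ hcard, one_smul]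

theorem depolarizing_isKadisonSchwarz [Nonempty n] : IsKadisonSchwarz (depolarizing 𝕜 n) :=
  krausMap_isKadisonSchwarz (by positivity) depolarizing_one

theorem reduction_isCoKadisonSchwarz (hn : 1 < Fintype.card n) :
    IsCoKadisonSchwarz (reduction 𝕜 n) := by
  have hc : 0 ≤ (2 * ((Fintype.card n : ℝ) - 1))⁻¹ := by
    have : (1 : ℝ) < Fintype.card n := by exact_mod_cast hn
    positivity
  refine isCoKadisonSchwarz_krausMap_comp_transpose hc ?_
  rw [← transpose_one, ← reduction_eq_krausMap_transpose, reduction_one hn, transpose_one]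

end KadisonSchwarz

theorem stmt6 (d : ℕ) (hd : 2 ≤ d) (a : ℝ) (ha0 : 0 ≤ a) (ha1 : a ≤ 1) :
    ∃ (l : ℝ) (Φ₁ Φ₂ : Matrix (Fin d) (Fin d) ℂ →ₗ[ℂ] Matrix (Fin d) (Fin d) ℂ),
      0 ≤ l ∧ l ≤ 1 ∧
      Φ₁ 1 = 1 ∧ Φ₂ 1 = 1 ∧
      (∀ X : Matrix (Fin d) (Fin d) ℂ,
        (Φ₁ (Xᴴ * X) - (Φ₁ X)ᴴ * Φ₁ X).PosSemidef) ∧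
      (∀ X : Matrix (Fin d) (Fin d) ℂ,
        (Φ₂ (Xᴴ * X) - Φ₂ X * (Φ₂ X)ᴴ).PosSemidef) ∧
      (∀ X : Matrix (Fin d) (Fin d) ℂ,
        (1 / ((d : ℂ) - (a : ℂ))) •
            (Matrix.trace X • (1 : Matrix (Fin d) (Fin d) ℂ) - (a : ℂ) • X)
          = (l : ℂ) • Φ₁ X + ((1 : ℂ) - (l : ℂ)) • Φ₂ X) := by
  have hcard : 1 < Fintype.card (Fin d) := by rw [Fintype.card_fin]; omega
  have : Nonempty (Fin d) := ⟨⟨0, by omega⟩⟩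
  have hd' : (2 : ℝ) ≤ d := by exact_mod_cast hd
  have hda : 0 < (d : ℝ) - a := by linarith
  refine ⟨d * (1 - a) / (d - a), depolarizing ℂ (Fin d), reduction ℂ (Fin d),
    div_nonneg (by nlinarith) hda.le, (div_le_one hda).2 (by nlinarith), depolarizing_one,
    reduction_one hcard, depolarizing_isKadisonSchwarz, reduction_isCoKadisonSchwarz hcard,
    fun X => ?_⟩
  have hdaC : (d : ℂ) - a ≠ 0 := by exact_mod_cast hda.ne'
  have hd1C : (d : ℂ) - 1 ≠ 0 := by exact_mod_cast (by linarith : (d : ℝ) - 1 ≠ 0)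
  rw [depolarizing_apply, reduction_apply, Fintype.card_fin]
  match_scalars <;> field_simp <;> ring
end
end

section
/- Let d ≥ 1, k ≥ 1, and let Φ : M_d(ℂ) → M_d(ℂ) be a unital linear map which is (k+1)-positive, i.e. the amplification Φ_{k+1} = id_{k+1} ⊗ Φ maps positive semidefinite matrices in M_{k+1}(M_d(ℂ)) to positive semidefinite matrices. Then Φ is a k-Kadison–Schwarz operator: Φ_k(X*X) ≥ Φ_k(X)*·Φ_k(X) for all X ∈ M_k(M_d(ℂ)). -/
open scoped ComplexOrder
open Matrix

noncomputable section

/-!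
Write `X* X = ∑ₗ Rₗ* Rₗ` over the block rows `Rₗ` of `X`. For one block row `R`, the matrix
`[R, 1]* [R, 1] = [[R* R, R*], [R, 1]]` is positive with `k + 1` block rows, so its image
`[[Φₖ(R* R), Φ(R*)], [Φ(R), 1]]` under `Φₖ₊₁` is positive as well; being hermitian it has
`Φ(R*) = Φ(R)*`, and its Schur complement with respect to the unit corner gives
`Φₖ(R* R) ≥ Φ(R)* Φ(R)`. Summing over the rows gives `Φₖ(X* X) ≥ Φₖ(X)* Φₖ(X)`, since the block
rows of `Φₖ(X)` are the `Φ(Rₗ)`.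
-/

namespace Matrix

section blockMap

variable {α : Type*} {n ι κ : Type*}

/-- Rectangular version of `amp`: `amp k Φ` is `blockMap Φ` by definition. -/
def blockMap (Φ : Matrix n n α → Matrix n n α) (X : Matrix (ι × n) (κ × n) α) :
    Matrix (ι × n) (κ × n) α :=
  of fun p q => Φ (of fun a b => X (p.1, a) (q.1, b)) p.2 q.2

def blockRow (X : Matrix (ι × n) κ α) (i : ι) : Matrix (Unit × n) κ α :=
  X.submatrix (fun p => (i, p.2)) id

theorem blockMap_submatrix {ι' κ' : Type*} (Φ : Matrix n n α → Matrix n n α)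
    (X : Matrix (ι × n) (κ × n) α) (f : ι' → ι) (g : κ' → κ) :
    blockMap Φ (X.submatrix (Prod.map f id) (Prod.map g id)) =
      (blockMap Φ X).submatrix (Prod.map f id) (Prod.map g id) :=
  rfl

theorem blockMap_blockRow (Φ : Matrix n n α → Matrix n n α) (X : Matrix (ι × n) (κ × n) α)
    (i : ι) : blockMap Φ (blockRow X i) = blockRow (blockMap Φ X) i :=
  rfl

theorem blockMap_fromBlocks {ι₁ ι₂ κ₁ κ₂ : Type*} (Φ : Matrix n n α → Matrix n n α)
    (A : Matrix (ι₁ × n) (κ₁ × n) α) (B : Matrix (ι₁ × n) (κ₂ × n) α)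
    (C : Matrix (ι₂ × n) (κ₁ × n) α) (D : Matrix (ι₂ × n) (κ₂ × n) α) :
    blockMap Φ ((fromBlocks A B C D).submatrix (Equiv.sumProdDistrib _ _ _)
        (Equiv.sumProdDistrib _ _ _)) =
      (fromBlocks (blockMap Φ A) (blockMap Φ B) (blockMap Φ C) (blockMap Φ D)).submatrix
        (Equiv.sumProdDistrib _ _ _) (Equiv.sumProdDistrib _ _ _) := by
  ext ⟨i | i, a⟩ ⟨j | j, b⟩ <;> rfl

theorem blockMap_sum [AddCommMonoid α] {F : Type*} [FunLike F (Matrix n n α) (Matrix n n α)]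
    [AddMonoidHomClass F (Matrix n n α) (Matrix n n α)] (Φ : F) {β : Type*} (s : Finset β)
    (X : β → Matrix (ι × n) (κ × n) α) :
    blockMap Φ (∑ a ∈ s, X a) = ∑ a ∈ s, blockMap Φ (X a) := by
  ext p q
  have hblock : (of fun a b => (∑ c ∈ s, X c) (p.1, a) (q.1, b)) =
      ∑ c ∈ s, of fun a b => X c (p.1, a) (q.1, b) := by
    ext; simp [sum_apply]
  rw [blockMap, of_apply, hblock, map_sum, sum_apply, sum_apply]
  rfl

theorem blockMap_one [AddMonoidWithOne α] [DecidableEq n] [DecidableEq κ] {F : Type*}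
    [FunLike F (Matrix n n α) (Matrix n n α)] [AddMonoidHomClass F (Matrix n n α) (Matrix n n α)]
    {Φ : F} (hΦ : Φ 1 = 1) :
    blockMap Φ (1 : Matrix (κ × n) (κ × n) α) = 1 := by
  ext ⟨i, a⟩ ⟨j, b⟩
  have hblock : (of fun a b => (1 : Matrix (κ × n) (κ × n) α) (i, a) (j, b)) =
      if i = j then 1 else 0 := by
    ext; split_ifs <;> simp_all [one_apply]
  rw [blockMap, of_apply, hblock]
  by_cases hij : i = j <;> simp [hij, hΦ, one_apply]

theorem conjTranspose_mul_self_eq_sum_blockRow [Fintype n] [Fintype ι]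
    [NonUnitalNonAssocSemiring α] [StarRing α] (X : Matrix (ι × n) κ α) :
    Xᴴ * X = ∑ i, (blockRow X i)ᴴ * blockRow X i := by
  ext p q
  simp [blockRow, mul_apply, Matrix.sum_apply, Fintype.sum_prod_type]

end blockMap

variable {𝕜 : Type*} [RCLike 𝕜] {n : Type*}

def BlockPositive (ι : Type*) [Fintype ι] (Φ : Matrix n n 𝕜 → Matrix n n 𝕜) : Prop :=
  ∀ M : Matrix (ι × n) (ι × n) 𝕜, M.PosSemidef → (blockMap Φ M).PosSemidef

theorem BlockPositive.of_equiv {ι ι' : Type*} [Fintype ι] [Fintype ι']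
    {Φ : Matrix n n 𝕜 → Matrix n n 𝕜} (hΦ : BlockPositive ι Φ) (e : ι' ≃ ι) :
    BlockPositive ι' Φ := by
  intro M hM
  have hM_eq : M = (M.submatrix (Prod.map e.symm id) (Prod.map e.symm id)).submatrix
      (Prod.map e id) (Prod.map e id) := by
    ext ⟨i, a⟩ ⟨j, b⟩; simp
  rw [hM_eq, blockMap_submatrix]
  exact (hΦ _ (hM.submatrix _)).submatrix _

theorem BlockPositive.blockMap_kadisonSchwarz_of_sum [Fintype n] [DecidableEq n] {ι κ : Type*}
    [Fintype ι] [Fintype κ] [DecidableEq κ] {Φ : Matrix n n 𝕜 →ₗ[𝕜] Matrix n n 𝕜}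
    (hunital : Φ 1 = 1) (hpos : BlockPositive (ι ⊕ κ) Φ) (R : Matrix (κ × n) (ι × n) 𝕜) :
    (blockMap Φ (Rᴴ * R) - (blockMap Φ R)ᴴ * blockMap Φ R).PosSemidef := by
  have hZ : (fromBlocks (Rᴴ * R) Rᴴ R 1).PosSemidef := by
    simpa [conjTranspose_fromCols_eq_fromRows_conjTranspose, fromRows_mul_fromCols] using
      posSemidef_conjTranspose_mul_self (fromCols R (1 : Matrix (κ × n) (κ × n) 𝕜))
  have hΦZ := hpos _ (hZ.submatrix (Equiv.sumProdDistrib ι κ n))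
  rw [blockMap_fromBlocks, posSemidef_submatrix_equiv, blockMap_one hunital] at hΦZ
  have hB : blockMap Φ Rᴴ = (blockMap Φ R)ᴴ := by
    have := hΦZ.isHermitian.eq
    rw [fromBlocks_conjTranspose, fromBlocks_inj] at this
    exact this.2.1.symm
  rw [hB] at hΦZ
  let : Invertible (1 : Matrix (κ × n) (κ × n) 𝕜) := invertibleOne
  have hSchur := (PosDef.one.fromBlocks₂₂ (blockMap Φ (Rᴴ * R)) (blockMap Φ R)ᴴ).mp
    (by rwa [conjTranspose_conjTranspose])
  rwa [inv_one, Matrix.mul_one, conjTranspose_conjTranspose] at hSchur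

theorem BlockPositive.blockMap_kadisonSchwarz [Fintype n] [DecidableEq n] {ι κ : Type*}
    [Fintype ι] [Fintype κ] {Φ : Matrix n n 𝕜 →ₗ[𝕜] Matrix n n 𝕜} (hunital : Φ 1 = 1)
    (hpos : BlockPositive (ι ⊕ Unit) Φ) (X : Matrix (κ × n) (ι × n) 𝕜) :
    (blockMap Φ (Xᴴ * X) - (blockMap Φ X)ᴴ * blockMap Φ X).PosSemidef := by
  rw [conjTranspose_mul_self_eq_sum_blockRow X,
    conjTranspose_mul_self_eq_sum_blockRow (blockMap Φ X), blockMap_sum,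
    ← Finset.sum_sub_distrib]
  refine posSemidef_sum _ fun l _ => ?_
  rw [← blockMap_blockRow]
  exact hpos.blockMap_kadisonSchwarz_of_sum hunital _

end Matrix

theorem stmt13_general (d k : ℕ)
    (Φ : Matrix (Fin d) (Fin d) ℂ →ₗ[ℂ] Matrix (Fin d) (Fin d) ℂ)
    (hunital : Φ 1 = 1)
    (hpos : ∀ X : Matrix (Fin (k + 1) × Fin d) (Fin (k + 1) × Fin d) ℂ,
      X.PosSemidef → (amp (k + 1) (⇑Φ) X).PosSemidef) :
    ∀ X : Matrix (Fin k × Fin d) (Fin k × Fin d) ℂ,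
      (amp k (⇑Φ) (Xᴴ * X) - (amp k (⇑Φ) X)ᴴ * amp k (⇑Φ) X).PosSemidef := by
  have hpos' : BlockPositive (Fin k ⊕ Unit) Φ :=
    BlockPositive.of_equiv (ι := Fin (k + 1)) hpos (Fintype.equivOfCardEq (by simp))
  exact hpos'.blockMap_kadisonSchwarz hunital

theorem stmt13 (d k : ℕ) (hd : 1 ≤ d) (hk : 1 ≤ k)
    (Φ : Matrix (Fin d) (Fin d) ℂ →ₗ[ℂ] Matrix (Fin d) (Fin d) ℂ)
    (hunital : Φ 1 = 1)
    (hpos : ∀ X : Matrix (Fin (k + 1) × Fin d) (Fin (k + 1) × Fin d) ℂ,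
      X.PosSemidef → (amp (k + 1) (⇑Φ) X).PosSemidef) :
    ∀ X : Matrix (Fin k × Fin d) (Fin k × Fin d) ℂ,
      (amp k (⇑Φ) (Xᴴ * X) - (amp k (⇑Φ) X)ᴴ * amp k (⇑Φ) X).PosSemidef :=
  stmt13_general d k Φ hunital hpos
end
end

section
/- Let d ≥ 2, let 1 ≤ k ≤ d, and let a be a real number with a < d. Define R_a : M_d(ℂ) → M_d(ℂ) by R_a(X) = (1/(d−a))·(Tr(X)·I_d − a·X). Then R_a is k-positive if and only if a ≤ 1/k. -/
/-!
Write `R_a = Ψ / (d - a)` with `Ψ Y = Tr Y • I - a • Y` and `d - a > 0`. The map `Y ↦ Tr Y • I` has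
Kraus operators `|j⟩⟨i|`, so for `X = Bᴴ B` the quadratic form of `(id_k ⊗ Ψ) X` at `u` is
`∑_α (‖Vᴴ U‖_F² - a |Tr (Vᴴ U)|²)`, where `U` is `u` read as a `k × d` matrix and `V = V_α` is the
row `α` of `B` read likewise (and conjugated). Diagonalising `V Vᴴ` by a unitary and applying
Cauchy–Schwarz twice gives `|Tr (Vᴴ U)|² ≤ k ‖Vᴴ U‖_F²`, hence positivity when `a k ≤ 1`.
Conversely, `X = ψ ψᴴ` and `u = ψ` for the maximally entangled `ψ = ∑_{q < k} e_q ⊗ e_q` give the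
value `(k - a k²) / (d - a)`, which forces `a k ≤ 1`.
-/

open scoped ComplexOrder
open Matrix

noncomputable section

namespace Matrix

variable {𝕜 m n : Type*} [RCLike 𝕜] [Fintype m] [Fintype n]

lemma norm_star_dotProduct_sq_le (v u : n → 𝕜) :
    ‖star v ⬝ᵥ u‖ ^ 2 ≤ (∑ l, ‖v l‖ ^ 2) * ∑ l, ‖u l‖ ^ 2 := by
  calc ‖star v ⬝ᵥ u‖ ^ 2 ≤ (∑ l, ‖v l‖ * ‖u l‖) ^ 2 := by
        gcongr
        refine (norm_sum_le _ _).trans_eq ?_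
        simp
    _ ≤ _ := Finset.sum_mul_sq_le_sq_mul_sq _ _ _

omit [Fintype m] in
lemma mul_conjTranspose_self_apply_self (A : Matrix m n 𝕜) (p : m) :
    (A * Aᴴ) p p = ((∑ l, ‖A p l‖ ^ 2 : ℝ) : 𝕜) := by
  simp [mul_apply, RCLike.mul_conj]

lemma trace_mul_conjTranspose_self (A : Matrix m n 𝕜) :
    (A * Aᴴ).trace = ((∑ p, ∑ l, ‖A p l‖ ^ 2 : ℝ) : 𝕜) := by
  simp [trace, mul_conjTranspose_self_apply_self]

lemma star_dotProduct_conjTranspose_mul_mulVec (B : Matrix m n 𝕜) (w : n → 𝕜) :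
    star w ⬝ᵥ (Bᴴ * B) *ᵥ w = ((∑ α, ‖(B *ᵥ w) α‖ ^ 2 : ℝ) : 𝕜) := by
  rw [← mulVec_mulVec, dotProduct_mulVec, vecMul_conjTranspose, star_star]
  simp [dotProduct, RCLike.conj_mul]

lemma norm_trace_conjTranspose_mul_sq_le_of_isDiag (V U : Matrix m n 𝕜)
    (hV : (V * Vᴴ).IsDiag) :
    ‖(Vᴴ * U).trace‖ ^ 2 ≤ Fintype.card m * ∑ l, ∑ i, ‖(Vᴴ * U) l i‖ ^ 2 := by
  have frob : ∑ l, ∑ i, ‖(Vᴴ * U) l i‖ ^ 2 = ∑ p, (∑ l, ‖V p l‖ ^ 2) * ∑ i, ‖U p i‖ ^ 2 := by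
    apply RCLike.ofReal_injective (K := 𝕜)
    calc _ = ((Vᴴ * U) * (Vᴴ * U)ᴴ).trace := (trace_mul_conjTranspose_self _).symm
      _ = ((V * Vᴴ) * (U * Uᴴ)).trace := by
          rw [conjTranspose_mul, conjTranspose_conjTranspose, ← Matrix.mul_assoc, trace_mul_comm]
          simp only [Matrix.mul_assoc]
      _ = ∑ p, (V * Vᴴ) p p * (U * Uᴴ) p p := by
          refine Finset.sum_congr rfl fun p _ => ?_
          rw [diag_apply, mul_apply,
            Fintype.sum_eq_single p fun q hq => by rw [hV hq.symm, zero_mul]]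
      _ = _ := by simp [mul_conjTranspose_self_apply_self]
  calc ‖(Vᴴ * U).trace‖ ^ 2 = ‖∑ p, star (V p) ⬝ᵥ U p‖ ^ 2 := by
        rw [trace_mul_comm]
        simp [trace, mul_apply, dotProduct, mul_comm]
    _ ≤ Fintype.card m * ∑ p, ‖star (V p) ⬝ᵥ U p‖ ^ 2 := by
        refine ((sq_le_sq₀ (norm_nonneg _) (by positivity)).2 (norm_sum_le _ _)).trans ?_
        exact sq_sum_le_card_mul_sum_sq
    _ ≤ Fintype.card m * ∑ p, (∑ l, ‖V p l‖ ^ 2) * ∑ i, ‖U p i‖ ^ 2 := by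
        gcongr with p
        exact norm_star_dotProduct_sq_le _ _
    _ = _ := by rw [frob]

lemma norm_trace_conjTranspose_mul_sq_le [DecidableEq m] (V U : Matrix m n 𝕜) :
    ‖(Vᴴ * U).trace‖ ^ 2 ≤ Fintype.card m * ∑ l, ∑ i, ‖(Vᴴ * U) l i‖ ^ 2 := by
  -- Rotating the rows of `V` and `U` by one unitary fixes `Vᴴ * U` and can make `V * Vᴴ` diagonal.
  have hVV := isHermitian_mul_conjTranspose_self V
  set W : Matrix m m 𝕜 := (hVV.eigenvectorUnitary : Matrix m m 𝕜)
  have hWW : W * star W = 1 := Unitary.coe_mul_star_self _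
  have hrot : (star W * V)ᴴ * (star W * U) = Vᴴ * U := by
    rw [conjTranspose_mul, ← star_eq_conjTranspose (star W), star_star, Matrix.mul_assoc,
      ← Matrix.mul_assoc W, hWW, Matrix.one_mul]
  have hdiag : ((star W * V) * (star W * V)ᴴ).IsDiag := by
    have h := hVV.conjStarAlgAut_star_eigenvectorUnitary
    rw [Unitary.conjStarAlgAut_star_apply] at h
    rw [conjTranspose_mul, ← star_eq_conjTranspose (star W), star_star]
    simp only [Matrix.mul_assoc] at h ⊢
    rw [h]
    exact isDiag_diagonal _
  simpa only [hrot] using norm_trace_conjTranspose_mul_sq_le_of_isDiag _ (star W * U) hdiag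

end Matrix

/-- Reading `u : m × n → R` as a vector of `Rᵐ ⊗ Rⁿ`, this is `(1 ⊗ |j⟩⟨i|) u`. -/
def moveColumn {R m n : Type*} [Zero R] [DecidableEq n] (u : m × n → R) (i j : n) : m × n → R :=
  fun s => if s.2 = j then u (s.1, i) else 0

section MoveColumn

variable {𝕜 m n : Type*} [RCLike 𝕜] [Fintype m] [Fintype n]

lemma star_dotProduct_eq_trace (V U : Matrix m n 𝕜) :
    star (fun s : m × n => V s.1 s.2) ⬝ᵥ (fun s => U s.1 s.2) = (Vᴴ * U).trace := by
  simp only [dotProduct, Fintype.sum_prod_type, trace, diag, mul_apply]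
  exact Finset.sum_comm

variable [DecidableEq n]

lemma star_dotProduct_moveColumn (V U : Matrix m n 𝕜) (i j : n) :
    star (fun s : m × n => V s.1 s.2) ⬝ᵥ moveColumn (fun s => U s.1 s.2) i j = (Vᴴ * U) j i := by
  simp [dotProduct, Fintype.sum_prod_type, moveColumn, mul_apply]

lemma norm_dotProduct_sq_le_card_mul_sum_moveColumn [DecidableEq m] (b u : m × n → 𝕜) :
    ‖b ⬝ᵥ u‖ ^ 2 ≤ Fintype.card m * ∑ j, ∑ i, ‖b ⬝ᵥ moveColumn u i j‖ ^ 2 := by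
  obtain ⟨V, rfl⟩ : ∃ V : Matrix m n 𝕜, star (fun s : m × n => V s.1 s.2) = b :=
    ⟨of fun q l => star (b (q, l)), by ext; simp⟩
  obtain ⟨U, rfl⟩ : ∃ U : Matrix m n 𝕜, (fun s : m × n => U s.1 s.2) = u :=
    ⟨of fun q i => u (q, i), rfl⟩
  simp only [star_dotProduct_eq_trace, star_dotProduct_moveColumn]
  exact norm_trace_conjTranspose_mul_sq_le V U

end MoveColumn

/-- The paper's `R_a` is `traceSubMap (1 / (d - a)) a`. -/
def traceSubMap {d : ℕ} (c a : ℝ) (Y : Matrix (Fin d) (Fin d) ℂ) : Matrix (Fin d) (Fin d) ℂ :=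
  (c : ℂ) • (Y.trace • 1 - (a : ℂ) • Y)

lemma traceSubMap_conjTranspose {d : ℕ} (c a : ℝ) (Y : Matrix (Fin d) (Fin d) ℂ) :
    traceSubMap c a Yᴴ = (traceSubMap c a Y)ᴴ := by
  simp [traceSubMap, conjTranspose_smul, trace_conjTranspose]

section Amplification

variable {k d : ℕ}

lemma isHermitian_amp {Φ : Matrix (Fin d) (Fin d) ℂ → Matrix (Fin d) (Fin d) ℂ}
    (hΦ : ∀ Y, Φ Yᴴ = (Φ Y)ᴴ) {X : Matrix (Fin k × Fin d) (Fin k × Fin d) ℂ}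
    (hX : X.IsHermitian) : (amp k Φ X).IsHermitian := by
  ext r s
  have hblock : (of fun i j => X (s.1, i) (r.1, j))ᴴ = of fun i j => X (r.1, i) (s.1, j) := by
    ext i j
    simpa using hX.apply (r.1, i) (s.1, j)
  simp only [amp, conjTranspose_apply, of_apply]
  rw [← conjTranspose_apply, ← hΦ, hblock]

lemma amp_traceSubMap (c a : ℝ) (X : Matrix (Fin k × Fin d) (Fin k × Fin d) ℂ) :
    amp k (traceSubMap c a) X = (c : ℂ) • (amp k (fun Y => Y.trace • 1) X - (a : ℂ) • X) := by
  ext r s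
  simp [amp, traceSubMap, mul_sub]

lemma dotProduct_amp_trace_smul_one_mulVec (X : Matrix (Fin k × Fin d) (Fin k × Fin d) ℂ)
    (u : Fin k × Fin d → ℂ) :
    star u ⬝ᵥ amp k (fun Y => Y.trace • 1) X *ᵥ u
      = ∑ j, ∑ i, star (moveColumn u i j) ⬝ᵥ X *ᵥ moveColumn u i j := by
  simp [dotProduct, mulVec, amp, moveColumn, Fintype.sum_prod_type, trace, one_apply,
    Finset.mul_sum, Finset.sum_mul, apply_ite, ite_mul, Finset.sum_ite_eq']
  rw [Finset.sum_comm]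
  conv_rhs => rw [Finset.sum_comm]
  exact Finset.sum_congr rfl fun i _ =>
    (Finset.sum_congr rfl fun p _ => Finset.sum_comm).trans Finset.sum_comm

lemma dotProduct_amp_traceSubMap_conjTranspose_mul_mulVec {ι : Type*} [Fintype ι] (c a : ℝ)
    (B : Matrix ι (Fin k × Fin d) ℂ) (u : Fin k × Fin d → ℂ) :
    star u ⬝ᵥ amp k (traceSubMap c a) (Bᴴ * B) *ᵥ u
      = ((c * (∑ j, ∑ i, ∑ α, ‖(B *ᵥ moveColumn u i j) α‖ ^ 2
          - a * ∑ α, ‖(B *ᵥ u) α‖ ^ 2) : ℝ) : ℂ) := by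
  rw [amp_traceSubMap, smul_mulVec, sub_mulVec, smul_mulVec, dotProduct_smul, dotProduct_sub,
    dotProduct_smul, dotProduct_amp_trace_smul_one_mulVec]
  simp only [star_dotProduct_conjTranspose_mul_mulVec, smul_eq_mul, Complex.coe_algebraMap]
  push_cast
  ring

theorem posSemidef_amp_traceSubMap {c a : ℝ} (hc : 0 ≤ c) (hak : a * k ≤ 1)
    {X : Matrix (Fin k × Fin d) (Fin k × Fin d) ℂ} (hX : X.PosSemidef) :
    (amp k (traceSubMap c a) X).PosSemidef := by
  open scoped MatrixOrder in
  obtain ⟨B, rfl⟩ := CStarAlgebra.nonneg_iff_eq_star_mul_self.mp hX.nonneg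
  refine .of_dotProduct_mulVec_nonneg
    (isHermitian_amp (traceSubMap_conjTranspose c a) hX.isHermitian) fun u => ?_
  rw [star_eq_conjTranspose, dotProduct_amp_traceSubMap_conjTranspose_mul_mulVec,
    Complex.zero_le_real]
  refine mul_nonneg hc (sub_nonneg.2 ?_)
  set S := ∑ j, ∑ i, ∑ α, ‖(B *ᵥ moveColumn u i j) α‖ ^ 2
  have hS : 0 ≤ S := by positivity
  have hQ : ∑ α, ‖(B *ᵥ u) α‖ ^ 2 ≤ k * S := by
    calc ∑ α, ‖(B *ᵥ u) α‖ ^ 2 ≤ ∑ α, k * ∑ j, ∑ i, ‖(B *ᵥ moveColumn u i j) α‖ ^ 2 :=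
          Finset.sum_le_sum fun α _ => by
            have h := norm_dotProduct_sq_le_card_mul_sum_moveColumn (B α) u
            rwa [Fintype.card_fin] at h
      _ = k * S := by
          rw [← Finset.mul_sum, Finset.sum_comm]
          exact congrArg _ (Finset.sum_congr rfl fun j _ => Finset.sum_comm)
  rcases le_or_gt a 0 with ha | ha
  · exact (mul_nonpos_of_nonpos_of_nonneg ha (by positivity)).trans hS
  · nlinarith

theorem mul_le_one_of_forall_posSemidef_amp_traceSubMap {c a : ℝ} (hc : 0 < c) (hkd : k ≤ d)
    (h : ∀ X : Matrix (Fin k × Fin d) (Fin k × Fin d) ℂ, X.PosSemidef →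
      (amp k (traceSubMap c a) X).PosSemidef) :
    a * k ≤ 1 := by
  set E : Matrix (Fin k) (Fin d) ℂ := (1 : Matrix (Fin d) (Fin d) ℂ).submatrix (Fin.castLE hkd) id
  have hE : E * Eᴴ = 1 := by
    rw [conjTranspose_submatrix, conjTranspose_one, ← submatrix_mul _ _ _ _ _ Function.bijective_id,
      Matrix.one_mul, submatrix_one _ (Fin.castLE_injective hkd)]
  have htrace : (Eᴴ * E).trace = k := by
    rw [trace_mul_comm, hE, trace_one, Fintype.card_fin]
  have hfrob : ∑ j, ∑ i, ‖(Eᴴ * E) j i‖ ^ 2 = k := by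
    have h := trace_mul_conjTranspose_self (Eᴴ * E)
    rw [conjTranspose_mul, conjTranspose_conjTranspose, Matrix.mul_assoc, ← Matrix.mul_assoc E, hE,
      Matrix.one_mul, htrace] at h
    simp only [Complex.coe_algebraMap] at h
    exact_mod_cast h.symm
  -- `fun s => E s.1 s.2` is the maximally entangled vector `∑_{q < k} e_q ⊗ e_q`.
  have hq := h _ (posSemidef_conjTranspose_mul_self
    (of fun (_ : Unit) => star fun s : Fin k × Fin d => E s.1 s.2))
    |>.dotProduct_mulVec_nonneg fun s => E s.1 s.2
  rw [dotProduct_amp_traceSubMap_conjTranspose_mul_mulVec, Complex.zero_le_real] at hq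
  simp only [Fintype.sum_unique, mulVec, of_apply, star_dotProduct_eq_trace,
    star_dotProduct_moveColumn, htrace, hfrob, Complex.norm_natCast] at hq
  rcases k.eq_zero_or_pos with hk | hk
  · simp [hk]
  · have : (0 : ℝ) < k := by exact_mod_cast hk
    nlinarith [mul_pos hc this]

end Amplification

theorem stmt14_general (d k : ℕ) (hk1 : 1 ≤ k) (hkd : k ≤ d)
    (a : ℝ) (ha : a < (d : ℝ)) :
    (∀ X : Matrix (Fin k × Fin d) (Fin k × Fin d) ℂ, X.PosSemidef →
        (amp k (fun Y : Matrix (Fin d) (Fin d) ℂ =>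
          (1 / ((d : ℂ) - (a : ℂ))) •
            (Matrix.trace Y • (1 : Matrix (Fin d) (Fin d) ℂ) - (a : ℂ) • Y)) X).PosSemidef)
      ↔ a ≤ 1 / (k : ℝ) := by
  have hc : 1 / ((d : ℂ) - (a : ℂ)) = ((1 / ((d : ℝ) - a) : ℝ) : ℂ) := by push_cast; rfl
  have hc_pos : 0 < 1 / ((d : ℝ) - a) := one_div_pos.2 (sub_pos.2 ha)
  rw [hc, le_div_iff₀ (Nat.cast_pos.2 hk1)]
  exact ⟨mul_le_one_of_forall_posSemidef_amp_traceSubMap hc_pos hkd,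
    fun hak _ hX => posSemidef_amp_traceSubMap hc_pos.le hak hX⟩

theorem stmt14 (d k : ℕ) (hd : 2 ≤ d) (hk1 : 1 ≤ k) (hkd : k ≤ d)
    (a : ℝ) (ha : a < (d : ℝ)) :
    (∀ X : Matrix (Fin k × Fin d) (Fin k × Fin d) ℂ, X.PosSemidef →
        (amp k (fun Y : Matrix (Fin d) (Fin d) ℂ =>
          (1 / ((d : ℂ) - (a : ℂ))) •
            (Matrix.trace Y • (1 : Matrix (Fin d) (Fin d) ℂ) - (a : ℂ) • Y)) X).PosSemidef)
      ↔ a ≤ 1 / (k : ℝ) :=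
  stmt14_general d k hk1 hkd a ha
end
end

section
/- Let d ≥ 1, k ≥ 1, and let Φ : M_d(ℂ) → M_d(ℂ) be a k-positive, unital, trace-preserving linear map satisfying Δ_k(Φ_k(X)*Φ_k(X)) ≤ Δ_k(X*X) for all X ∈ M_k(M_d(ℂ)). Let a be a real number with 0 ≤ a ≤ d/(k·d + 1). Then for every X ∈ M_k(M_d(ℂ)) with Δ_k(X) = 0, the matrix (d−a)·d·Δ_k(X*X) − a(d−a)·Φ_k(X*X) − a²·Φ_k(X)*·Φ_k(X) is positive semidefinite. -/
/-!
Two operator inequalities drive the proof. For positive `B` on `ℂᵏ ⊗ ℂᵈ` and `Tr₂` the partial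
trace over `ℂᵈ`, `B ≤ k • (Tr₂ B ⊗ 1)`: writing `B = ∑ v v*`, Cauchy–Schwarz for the inner product
of the positive definite matrix `M = (Tr₂ B + ε) ⊗ 1` gives `⟨w, B w⟩ ≤ Tr (M⁻¹ B) ⟨w, M w⟩`, and
`Tr (M⁻¹ B) = Tr ((Tr₂ B + ε)⁻¹ Tr₂ B) ≤ k`; then let `ε → 0`. Applying the positive map `Φ_k`,
which sends `G ⊗ 1` to `G ⊗ Φ(1) = G ⊗ 1`, gives `Φ_k(B) ≤ k • (Tr₂ B ⊗ 1)` as well.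

With `Y = Φ_k(X)` and `P_Z = Tr₂ Z ⊗ 1 = d Δ_k(Z)`, the matrix of the theorem equals
`a(d-a) (k P_{X*X} - Φ_k(X*X)) + a²kd (Δ_k(X*X) - Δ_k(Y*Y)) + a² (k P_{Y*Y} - Y*Y)`
`+ (d - a(kd+1)) P_{X*X}`, whose coefficients are nonnegative because `0 ≤ a ≤ d/(kd+1)`.
-/

open scoped ComplexOrder
open Matrix

noncomputable section

open scoped Kronecker MatrixOrder Topology
open Filter RCLike

namespace Matrix

lemma trace_mul_vecMulVec {n R : Type*} [Fintype n] [CommSemiring R] (A : Matrix n n R)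
    (u v : n → R) : trace (A * vecMulVec u v) = v ⬝ᵥ A *ᵥ u := by
  rw [mul_vecMulVec, trace, dotProduct_comm]
  rfl

section QuadraticForm

variable {n 𝕜 : Type*} [Fintype n] [RCLike 𝕜]

lemma PosSemidef.of_re_dotProduct_mulVec_nonneg {M : Matrix n n 𝕜} (hM : M.IsHermitian)
    (h : ∀ x, 0 ≤ re (star x ⬝ᵥ M *ᵥ x)) : M.PosSemidef :=
  .of_dotProduct_mulVec_nonneg hM fun x =>
    RCLike.nonneg_iff.mpr ⟨h x, hM.im_star_dotProduct_mulVec_self x⟩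

lemma PosSemidef.norm_dotProduct_mulVec_sq_le {M : Matrix n n 𝕜} (hM : M.PosSemidef)
    (u w : n → 𝕜) :
    ‖star u ⬝ᵥ M *ᵥ w‖ ^ 2 ≤
      re (star u ⬝ᵥ M *ᵥ u) * re (star w ⬝ᵥ M *ᵥ w) := by
  let _ := M.toSeminormedAddCommGroup hM
  let _ := M.toInnerProductSpace hM
  have h := inner_mul_inner_self_le (𝕜 := 𝕜) u w
  rw [← inner_conj_symm w u, RCLike.norm_conj, ← sq] at h
  have hinner : ∀ x y : n → 𝕜, inner 𝕜 x y = star x ⬝ᵥ M *ᵥ y := fun x y => dotProduct_comm _ _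
  simpa only [hinner] using h

lemma star_dotProduct_vecMulVec_mulVec (v w : n → 𝕜) :
    star w ⬝ᵥ vecMulVec v (star v) *ᵥ w = (‖star v ⬝ᵥ w‖ ^ 2 : ℝ) := by
  rw [vecMulVec_mulVec, dotProduct_comm, op_smul_eq_smul, smul_dotProduct, smul_eq_mul,
    RCLike.ofReal_pow, ← RCLike.mul_conj, starRingEnd_apply, star_dotProduct, star_star,
    dotProduct_comm v]

variable [DecidableEq n]

lemma PosDef.norm_star_dotProduct_sq_le {M : Matrix n n 𝕜} (hM : M.PosDef) (v w : n → 𝕜) :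
    ‖star v ⬝ᵥ w‖ ^ 2 ≤
      re (star v ⬝ᵥ M⁻¹ *ᵥ v) * re (star w ⬝ᵥ M *ᵥ w) := by
  have hinv : ∀ x, star (M⁻¹ *ᵥ v) ⬝ᵥ M *ᵥ x = star v ⬝ᵥ x := fun x => by
    rw [star_mulVec, hM.inv.isHermitian.eq, ← dotProduct_mulVec, mulVec_mulVec,
      nonsing_inv_mul _ ((isUnit_iff_isUnit_det M).mp hM.isUnit), one_mulVec]
  have h := hM.posSemidef.norm_dotProduct_mulVec_sq_le (M⁻¹ *ᵥ v) w
  rwa [hinv, hinv] at h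

lemma PosDef.re_dotProduct_mulVec_le {M B : Matrix n n 𝕜} (hM : M.PosDef) (hB : B.PosSemidef)
    (w : n → 𝕜) :
    re (star w ⬝ᵥ B *ᵥ w) ≤
      re (trace (M⁻¹ * B)) * re (star w ⬝ᵥ M *ᵥ w) := by
  obtain ⟨m, v, rfl⟩ := posSemidef_iff_eq_sum_vecMulVec.mp hB
  simp only [sum_mulVec, dotProduct_sum, Finset.mul_sum, trace_sum, map_sum, Finset.sum_mul]
  refine Finset.sum_le_sum fun i _ => ?_
  rw [star_dotProduct_vecMulVec_mulVec, trace_mul_vecMulVec, RCLike.ofReal_re]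
  exact hM.norm_star_dotProduct_sq_le (v i) w

end QuadraticForm

section PartialTrace

variable {ι κ R : Type*} [Fintype κ]

def partialTraceRight [AddCommMonoid R] (B : Matrix (ι × κ) (ι × κ) R) : Matrix ι ι R :=
  of fun i j => ∑ t, B (i, t) (j, t)

lemma partialTraceRight_eq_sum_submatrix [AddCommMonoid R] (B : Matrix (ι × κ) (ι × κ) R) :
    B.partialTraceRight = ∑ t, B.submatrix (·, t) (·, t) := by
  ext i j
  simp [partialTraceRight, sum_apply]

lemma trace_kronecker_one_mul [Fintype ι] [DecidableEq κ] [Semiring R]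
    (A : Matrix ι ι R) (B : Matrix (ι × κ) (ι × κ) R) :
    trace ((A ⊗ₖ (1 : Matrix κ κ R)) * B) = trace (A * B.partialTraceRight) := by
  simp only [trace, diag, mul_apply, kroneckerMap_apply, one_apply, partialTraceRight, of_apply,
    Fintype.sum_prod_type, mul_ite, mul_one, mul_zero, ite_mul, zero_mul, Finset.sum_ite_eq,
    Finset.mem_univ, if_true, Finset.mul_sum]
  exact Finset.sum_congr rfl fun i _ => Finset.sum_comm

variable {𝕜 : Type*} [RCLike 𝕜]

lemma PosSemidef.partialTraceRight {B : Matrix (ι × κ) (ι × κ) 𝕜} (hB : B.PosSemidef) :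
    B.partialTraceRight.PosSemidef := by
  rw [partialTraceRight_eq_sum_submatrix]
  exact posSemidef_sum _ fun t _ => hB.submatrix _

lemma PosSemidef.re_dotProduct_mulVec_le_card_mul [Fintype ι] [DecidableEq ι] [DecidableEq κ]
    {B : Matrix (ι × κ) (ι × κ) 𝕜} (hB : B.PosSemidef) (w : ι × κ → 𝕜) {ε : ℝ} (hε : 0 < ε) :
    re (star w ⬝ᵥ B *ᵥ w) ≤ Fintype.card ι *
      (re (star w ⬝ᵥ (B.partialTraceRight ⊗ₖ (1 : Matrix κ κ 𝕜)) *ᵥ w)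
        + ε * re (star w ⬝ᵥ w)) := by
  set A := B.partialTraceRight + ε • (1 : Matrix ι ι 𝕜)
  have hA : A.PosDef := PosDef.posSemidef_add hB.partialTraceRight (PosDef.one.smul hε)
  have hM : (A ⊗ₖ (1 : Matrix κ κ 𝕜)).PosDef := hA.kronecker PosDef.one
  have htr : re (trace ((A ⊗ₖ (1 : Matrix κ κ 𝕜))⁻¹ * B)) ≤ Fintype.card ι := by
    have hptr : B.partialTraceRight = A - ε • 1 := (add_sub_cancel_right _ _).symm
    rw [inv_kronecker, inv_one, trace_kronecker_one_mul, hptr, mul_sub,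
      nonsing_inv_mul _ ((isUnit_iff_isUnit_det A).mp hA.isUnit), mul_smul_comm, mul_one,
      trace_sub, trace_one, trace_smul, map_sub, RCLike.smul_re, RCLike.natCast_re]
    exact sub_le_self _ (mul_nonneg hε.le (RCLike.nonneg_iff.mp hA.inv.posSemidef.trace_nonneg).1)
  have hquad : re (star w ⬝ᵥ (A ⊗ₖ (1 : Matrix κ κ 𝕜)) *ᵥ w) =
      re (star w ⬝ᵥ (B.partialTraceRight ⊗ₖ (1 : Matrix κ κ 𝕜)) *ᵥ w)
        + ε * re (star w ⬝ᵥ w) := by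
    rw [add_kronecker, smul_kronecker, one_kronecker_one, add_mulVec, dotProduct_add, map_add,
      smul_mulVec, dotProduct_smul, RCLike.smul_re, one_mulVec]
  calc re (star w ⬝ᵥ B *ᵥ w)
      ≤ re (trace ((A ⊗ₖ (1 : Matrix κ κ 𝕜))⁻¹ * B))
          * re (star w ⬝ᵥ (A ⊗ₖ (1 : Matrix κ κ 𝕜)) *ᵥ w) := hM.re_dotProduct_mulVec_le hB w
    _ ≤ _ := hquad ▸ mul_le_mul_of_nonneg_right htr (hM.posSemidef.re_dotProduct_nonneg w)

lemma PosSemidef.le_card_smul_partialTraceRight_kronecker_one [Fintype ι] [DecidableEq ι]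
    [DecidableEq κ] {B : Matrix (ι × κ) (ι × κ) 𝕜} (hB : B.PosSemidef) :
    B ≤ (Fintype.card ι : 𝕜) • (B.partialTraceRight ⊗ₖ (1 : Matrix κ κ 𝕜)) := by
  have hherm :
      ((Fintype.card ι : 𝕜) • (B.partialTraceRight ⊗ₖ (1 : Matrix κ κ 𝕜)) - B).IsHermitian :=
    ((hB.partialTraceRight.kronecker .one).smul (Nat.cast_nonneg _)).isHermitian.sub hB.isHermitian
  refine le_iff.mpr (.of_re_dotProduct_mulVec_nonneg hherm fun w => ?_)
  set q := re (star w ⬝ᵥ (B.partialTraceRight ⊗ₖ (1 : Matrix κ κ 𝕜)) *ᵥ w)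
  have hlim : Tendsto (fun ε : ℝ => Fintype.card ι * (q + ε * re (star w ⬝ᵥ w)))
      (𝓝[>] 0) (𝓝 (Fintype.card ι * q)) := by
    refine tendsto_nhdsWithin_of_tendsto_nhds ?_
    simpa using ((continuous_id.mul continuous_const).const_add q).const_mul _ |>.tendsto 0
  have hle := ge_of_tendsto hlim (eventually_nhdsWithin_of_forall fun ε hε =>
    hB.re_dotProduct_mulVec_le_card_mul w hε)
  simpa [sub_mulVec, smul_mulVec, q] using hle

end PartialTrace

end Matrix

section Amplification

variable {k d : ℕ} (Φ : Matrix (Fin d) (Fin d) ℂ →ₗ[ℂ] Matrix (Fin d) (Fin d) ℂ)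

lemma amp_sub (X Y : Matrix (Fin k × Fin d) (Fin k × Fin d) ℂ) :
    amp k Φ (X - Y) = amp k Φ X - amp k Φ Y := by
  ext p q
  simp only [amp, of_apply, Matrix.sub_apply]
  rw [← Matrix.sub_apply, ← map_sub]
  rfl

lemma amp_smul (c : ℂ) (X : Matrix (Fin k × Fin d) (Fin k × Fin d) ℂ) :
    amp k Φ (c • X) = c • amp k Φ X := by
  ext p q
  simp only [amp, of_apply, Matrix.smul_apply]
  rw [← Matrix.smul_apply, ← map_smul]
  rfl

lemma amp_kronecker (M : Matrix (Fin k) (Fin k) ℂ) (W : Matrix (Fin d) (Fin d) ℂ) :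
    amp k Φ (M ⊗ₖ W) = M ⊗ₖ Φ W := by
  ext p q
  have hblock : (of fun i j => (M ⊗ₖ W) (p.1, i) (q.1, j)) = M p.1 q.1 • W := by
    ext i j
    simp [kroneckerMap_apply]
  simp only [amp, of_apply]
  rw [hblock, map_smul]
  rfl

lemma amp_Delta (B : Matrix (Fin k × Fin d) (Fin k × Fin d) ℂ) :
    amp k (Delta d) B = (d : ℂ)⁻¹ • (B.partialTraceRight ⊗ₖ (1 : Matrix (Fin d) (Fin d) ℂ)) := by
  ext p q
  simp [amp, Delta, partialTraceRight, trace, kroneckerMap_apply, div_eq_inv_mul, mul_assoc]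

variable {Φ}

lemma amp_mono (hΦ : ∀ X : Matrix (Fin k × Fin d) (Fin k × Fin d) ℂ,
      X.PosSemidef → (amp k Φ X).PosSemidef)
    {X Y : Matrix (Fin k × Fin d) (Fin k × Fin d) ℂ} (hXY : X ≤ Y) : amp k Φ X ≤ amp k Φ Y :=
  le_iff.mpr (amp_sub Φ Y X ▸ hΦ _ hXY)

lemma amp_le_smul_partialTraceRight_kronecker_one
    (hΦ : ∀ X : Matrix (Fin k × Fin d) (Fin k × Fin d) ℂ,
      X.PosSemidef → (amp k Φ X).PosSemidef) (hΦ1 : Φ 1 = 1)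
    {B : Matrix (Fin k × Fin d) (Fin k × Fin d) ℂ} (hB : B.PosSemidef) :
    amp k Φ B ≤ (k : ℂ) • (B.partialTraceRight ⊗ₖ (1 : Matrix (Fin d) (Fin d) ℂ)) := by
  have h := amp_mono hΦ (Fintype.card_fin k ▸ hB.le_card_smul_partialTraceRight_kronecker_one)
  rwa [amp_smul, amp_kronecker, hΦ1] at h

end Amplification

theorem stmt17_general (d k : ℕ) (hd : 1 ≤ d)
    (Φ : Matrix (Fin d) (Fin d) ℂ →ₗ[ℂ] Matrix (Fin d) (Fin d) ℂ)
    (hkpos : ∀ X : Matrix (Fin k × Fin d) (Fin k × Fin d) ℂ,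
      X.PosSemidef → (amp k (⇑Φ) X).PosSemidef)
    (hunital : Φ 1 = 1)
    (hstar : ∀ X : Matrix (Fin k × Fin d) (Fin k × Fin d) ℂ,
      (amp k (Delta d) (Xᴴ * X) -
        amp k (Delta d) ((amp k (⇑Φ) X)ᴴ * amp k (⇑Φ) X)).PosSemidef)
    (a : ℝ) (ha0 : 0 ≤ a) (ha1 : a ≤ (d : ℝ) / ((k : ℝ) * (d : ℝ) + 1)) :
    ∀ X : Matrix (Fin k × Fin d) (Fin k × Fin d) ℂ,
      amp k (Delta d) X = 0 →
      ((((d : ℂ) - (a : ℂ)) * (d : ℂ)) • amp k (Delta d) (Xᴴ * X)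
        - ((a : ℂ) * ((d : ℂ) - (a : ℂ))) • amp k (⇑Φ) (Xᴴ * X)
        - ((a : ℂ) ^ 2) • ((amp k (⇑Φ) X)ᴴ * amp k (⇑Φ) X)).PosSemidef := by
  intro X _
  set Y := amp k Φ X
  set PX := (Xᴴ * X).partialTraceRight ⊗ₖ (1 : Matrix (Fin d) (Fin d) ℂ)
  set PY := (Yᴴ * Y).partialTraceRight ⊗ₖ (1 : Matrix (Fin d) (Fin d) ℂ)
  have hΦX : amp k Φ (Xᴴ * X) ≤ (k : ℂ) • PX :=
    amp_le_smul_partialTraceRight_kronecker_one hkpos hunital (posSemidef_conjTranspose_mul_self X)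
  have hYY : Yᴴ * Y ≤ (k : ℂ) • PY := by
    simpa using (posSemidef_conjTranspose_mul_self Y).le_card_smul_partialTraceRight_kronecker_one
  have hΔ : ((d : ℂ)⁻¹ • PX - (d : ℂ)⁻¹ • PY).PosSemidef := by simpa only [amp_Delta] using hstar X
  have hPX : PX.PosSemidef := (posSemidef_conjTranspose_mul_self X).partialTraceRight.kronecker .one
  have hd0 : (d : ℂ) ≠ 0 := by exact_mod_cast (Nat.one_le_iff_ne_zero.mp hd)
  have hakd : a * (k * d + 1) ≤ d := (le_div_iff₀ (by positivity)).mp ha1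
  have had : a ≤ d := (le_mul_of_one_le_right ha0 (by simp; positivity)).trans hakd
  rw [show (((d : ℂ) - a) * d) • amp k (Delta d) (Xᴴ * X) - ((a : ℂ) * (d - a)) • amp k Φ (Xᴴ * X)
        - (a : ℂ) ^ 2 • (Yᴴ * Y)
      = ((a * (d - a) : ℝ) : ℂ) • ((k : ℂ) • PX - amp k Φ (Xᴴ * X))
        + ((a ^ 2 * k * d : ℝ) : ℂ) • ((d : ℂ)⁻¹ • PX - (d : ℂ)⁻¹ • PY)
        + ((a ^ 2 : ℝ) : ℂ) • ((k : ℂ) • PY - Yᴴ * Y) + ((d - a * (k * d + 1) : ℝ) : ℂ) • PX by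
    rw [amp_Delta]; match_scalars <;> field_simp <;> ring]
  have hnn : ∀ {c : ℝ}, 0 ≤ c → 0 ≤ (c : ℂ) := Complex.zero_le_real.mpr
  exact ((((le_iff.mp hΦX).smul (hnn (mul_nonneg ha0 (sub_nonneg.mpr had)))).add
    (hΔ.smul (hnn (by positivity)))).add ((le_iff.mp hYY).smul (hnn (by positivity)))).add
    (hPX.smul (hnn (sub_nonneg.mpr hakd)))

theorem stmt17 (d k : ℕ) (hd : 1 ≤ d) (hk : 1 ≤ k)
    (Φ : Matrix (Fin d) (Fin d) ℂ →ₗ[ℂ] Matrix (Fin d) (Fin d) ℂ)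
    (hkpos : ∀ X : Matrix (Fin k × Fin d) (Fin k × Fin d) ℂ,
      X.PosSemidef → (amp k (⇑Φ) X).PosSemidef)
    (hunital : Φ 1 = 1)
    (htp : ∀ X, Matrix.trace (Φ X) = Matrix.trace X)
    (hstar : ∀ X : Matrix (Fin k × Fin d) (Fin k × Fin d) ℂ,
      (amp k (Delta d) (Xᴴ * X) -
        amp k (Delta d) ((amp k (⇑Φ) X)ᴴ * amp k (⇑Φ) X)).PosSemidef)
    (a : ℝ) (ha0 : 0 ≤ a) (ha1 : a ≤ (d : ℝ) / ((k : ℝ) * (d : ℝ) + 1)) :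
    ∀ X : Matrix (Fin k × Fin d) (Fin k × Fin d) ℂ,
      amp k (Delta d) X = 0 →
      ((((d : ℂ) - (a : ℂ)) * (d : ℂ)) • amp k (Delta d) (Xᴴ * X)
        - ((a : ℂ) * ((d : ℂ) - (a : ℂ))) • amp k (⇑Φ) (Xᴴ * X)
        - ((a : ℂ) ^ 2) • ((amp k (⇑Φ) X)ᴴ * amp k (⇑Φ) X)).PosSemidef :=
  stmt17_general d k hd Φ hkpos hunital hstar a ha0 ha1
end
end
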